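/- arXiv:2205.04283 — 3 statements merged into one kernel-verified Lean document; each statement's English description precedes it below -/
import Mathlib

section
/- Let 1 ≤ p < ∞ and let μ₀, μ₁, ν be Borel probability measures on ℝ^d supported in B(0,M). Then both |W̲_p^p(μ₁,ν) − W̲_p^p(μ₀,ν)| and |W̄_p^p(μ₁,ν) − W̄_p^p(μ₀,ν)| are bounded by C_{p,M} · W̄₁(μ₀,μ₁), where C_{p,M} = p·2^{p−1}·M^{p−1}. -/
open MeasureTheory Metric

noncomputable section

/-- The p-th power of the p-Wasserstein distance, as infimum of transport cost over couplings. -/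
def Wpp {E : Type*} [NormedAddCommGroup E] [MeasurableSpace E]
    (p : ℝ) (μ ν : Measure E) : ℝ :=
  sInf {r | ∃ π : Measure (E × E),
    π.map Prod.fst = μ ∧ π.map Prod.snd = ν ∧ r = ∫ z, ‖z.1 - z.2‖ ^ p ∂π}

variable {d : ℕ}

/-- The uniform probability distribution on the unit sphere of ℝ^d. -/
def unifSphere (d : ℕ) : Measure (sphere (0 : EuclideanSpace ℝ (Fin d)) 1) :=
  ((volume : Measure (EuclideanSpace ℝ (Fin d))).toSphere Set.univ)⁻¹ •
    (volume : Measure (EuclideanSpace ℝ (Fin d))).toSphere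

/-- The pushforward of μ under the projection x ↦ θᵀx. -/
def projMeasure (θ : sphere (0 : EuclideanSpace ℝ (Fin d)) 1)
    (μ : Measure (EuclideanSpace ℝ (Fin d))) : Measure ℝ :=
  μ.map (fun x => (inner ℝ (θ : EuclideanSpace ℝ (Fin d)) x : ℝ))

/-- The p-th power of the average-sliced p-Wasserstein distance. -/
def avgSlicedWpp (p : ℝ) (μ ν : Measure (EuclideanSpace ℝ (Fin d))) : ℝ :=
  ∫ θ : sphere (0 : EuclideanSpace ℝ (Fin d)) 1,
    Wpp p (projMeasure θ μ) (projMeasure θ ν) ∂(unifSphere d)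

/-- The p-th power of the max-sliced p-Wasserstein distance. -/
def maxSlicedWpp (p : ℝ) (μ ν : Measure (EuclideanSpace ℝ (Fin d))) : ℝ :=
  ⨆ θ : sphere (0 : EuclideanSpace ℝ (Fin d)) 1,
    Wpp p (projMeasure θ μ) (projMeasure θ ν)

open ProbabilityTheory Set

/-!
Fix a direction θ; everything then happens on the line. If α, β, γ are supported in the ball of
radius M, glue a coupling of (α, β) and a coupling of (α, γ) along their common marginal α. The
mean value theorem for t ↦ t ^ p on [0, 2M] gives the pointwise bound
‖b - c‖ ^ p ≤ ‖a - c‖ ^ p + p (2M) ^ (p - 1) ‖a - b‖, which integrates against the glued measure to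
W_p^p(β, γ) ≤ W_p^p(α, γ) + p (2M) ^ (p - 1) W_1(α, β). For the projected measures this bounds the
difference of the slice costs by p (2M) ^ (p - 1) W̄₁(μ₀, μ₁) uniformly in θ, and both averaging
over the sphere and taking the supremum preserve such a bound. The slice costs are Lipschitz in θ,
so on the compact sphere they are integrable and bounded.
-/

lemma abs_rpow_sub_rpow_le {p R s t : ℝ} (hp : 1 ≤ p) (hs : s ∈ Icc 0 R) (ht : t ∈ Icc 0 R) :
    |s ^ p - t ^ p| ≤ p * R ^ (p - 1) * |s - t| := by
  have hp₀ : 0 ≤ p := zero_le_one.trans hp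
  have hderiv : ∀ x ∈ Icc 0 R, HasDerivWithinAt (· ^ p) (p * x ^ (p - 1)) (Icc 0 R) x :=
    fun x _ => (Real.hasDerivAt_rpow_const (Or.inr hp)).hasDerivWithinAt
  have hbound : ∀ x ∈ Icc 0 R, ‖p * x ^ (p - 1)‖ ≤ p * R ^ (p - 1) := fun x hx => by
    rw [Real.norm_of_nonneg (mul_nonneg hp₀ (Real.rpow_nonneg hx.1 _))]
    exact mul_le_mul_of_nonneg_left (Real.rpow_le_rpow hx.1 hx.2 (by linarith)) hp₀
  simpa [Real.norm_eq_abs] using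
    (convex_Icc 0 R).norm_image_sub_le_of_norm_hasDerivWithin_le hderiv hbound ht hs

lemma norm_sub_rpow_le_add {E : Type*} [SeminormedAddCommGroup E] {p M : ℝ} (hp : 1 ≤ p)
    {a b c : E} (ha : ‖a‖ ≤ M) (hb : ‖b‖ ≤ M) (hc : ‖c‖ ≤ M) :
    ‖b - c‖ ^ p ≤ ‖a - c‖ ^ p + p * (2 * M) ^ (p - 1) * ‖a - b‖ := by
  have hbc : ‖b - c‖ ∈ Icc 0 (2 * M) :=
    ⟨norm_nonneg _, (norm_sub_le b c).trans (by linarith)⟩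
  have hac : ‖a - c‖ ∈ Icc 0 (2 * M) :=
    ⟨norm_nonneg _, (norm_sub_le a c).trans (by linarith)⟩
  have hL : 0 ≤ p * (2 * M) ^ (p - 1) :=
    mul_nonneg (by linarith) (Real.rpow_nonneg (hbc.1.trans hbc.2) _)
  have hdist : |‖b - c‖ - ‖a - c‖| ≤ ‖a - b‖ := by
    simpa [norm_sub_rev b a] using abs_norm_sub_norm_le (b - c) (a - c)
  linarith [le_abs_self (‖b - c‖ ^ p - ‖a - c‖ ^ p), abs_rpow_sub_rpow_le hp hbc hac,
    mul_le_mul_of_nonneg_left hdist hL]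

lemma ae_norm_le_of_measure_compl_ball_eq_zero {E : Type*} [SeminormedAddCommGroup E]
    [MeasurableSpace E] {μ : Measure E} {M : ℝ} (h : μ (ball 0 M)ᶜ = 0) : ∀ᵐ x ∂μ, ‖x‖ ≤ M :=
  measure_mono_null (fun x (hx : ¬‖x‖ ≤ M) => by simpa using (not_le.1 hx).le) h

lemma nonneg_of_ae_norm_le {E : Type*} [SeminormedAddCommGroup E] [MeasurableSpace E]
    {μ : Measure E} [NeZero μ] {M : ℝ} (h : ∀ᵐ x ∂μ, ‖x‖ ≤ M) : 0 ≤ M :=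
  let ⟨x, hx⟩ := h.exists
  (norm_nonneg x).trans hx

lemma exists_glue {X Y Z : Type*} [MeasurableSpace X] [MeasurableSpace Y] [MeasurableSpace Z]
    [StandardBorelSpace Y] [Nonempty Y] [StandardBorelSpace Z] [Nonempty Z]
    {κ : Measure (X × Y)} {π : Measure (X × Z)} [IsFiniteMeasure κ] [IsFiniteMeasure π]
    (h : κ.fst = π.fst) :
    ∃ ρ : Measure (X × Y × Z),
      ρ.map (Prod.map id Prod.fst) = κ ∧ ρ.map (Prod.map id Prod.snd) = π := by
  refine ⟨κ.fst ⊗ₘ (κ.condKernel ×ₖ π.condKernel), ?_, ?_⟩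
  · rw [← Measure.compProd_map measurable_fst, ← Kernel.fst_eq, Kernel.fst_prod,
      Measure.disintegrate]
  · rw [← Measure.compProd_map measurable_snd, ← Kernel.snd_eq, Kernel.snd_prod, h,
      Measure.disintegrate]

section Wasserstein

variable {E : Type*} [NormedAddCommGroup E] [MeasurableSpace E] {p M : ℝ} {μ ν : Measure E}

lemma Wpp_nonneg : 0 ≤ Wpp p μ ν :=
  Real.sInf_nonneg <| by rintro _ ⟨π, -, -, rfl⟩; exact integral_nonneg fun _ => by positivity

lemma Wpp_le_integral {π : Measure (E × E)} (h₁ : π.map Prod.fst = μ) (h₂ : π.map Prod.snd = ν) :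
    Wpp p μ ν ≤ ∫ z, ‖z.1 - z.2‖ ^ p ∂π :=
  csInf_le ⟨0, by rintro _ ⟨π, -, -, rfl⟩; exact integral_nonneg fun _ => by positivity⟩
    ⟨π, h₁, h₂, rfl⟩

lemma le_mul_Wpp [IsProbabilityMeasure μ] [IsProbabilityMeasure ν] {r L : ℝ} (hL : 0 ≤ L)
    (h : ∀ π : Measure (E × E), π.map Prod.fst = μ → π.map Prod.snd = ν →
      r ≤ L * ∫ z, ‖z.1 - z.2‖ ^ p ∂π) :
    r ≤ L * Wpp p μ ν := by
  rw [Wpp, ← smul_eq_mul, ← Real.sInf_smul_of_nonneg hL]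
  refine le_csInf (Set.Nonempty.smul_set ⟨_, μ.prod ν, by simp, by simp, rfl⟩) ?_
  rintro _ ⟨_, ⟨π, h₁, h₂, rfl⟩, rfl⟩
  exact h π h₁ h₂

lemma le_Wpp [IsProbabilityMeasure μ] [IsProbabilityMeasure ν] {r : ℝ}
    (h : ∀ π : Measure (E × E), π.map Prod.fst = μ → π.map Prod.snd = ν →
      r ≤ ∫ z, ‖z.1 - z.2‖ ^ p ∂π) :
    r ≤ Wpp p μ ν := by
  simpa using le_mul_Wpp zero_le_one (by simpa using h)

lemma Wpp_comm [IsProbabilityMeasure μ] [IsProbabilityMeasure ν] : Wpp p μ ν = Wpp p ν μ := by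
  suffices ∀ (μ ν : Measure E) [IsProbabilityMeasure μ] [IsProbabilityMeasure ν],
      Wpp p ν μ ≤ Wpp p μ ν from le_antisymm (this ν μ) (this μ ν)
  intro μ ν _ _
  refine le_Wpp fun π h₁ h₂ => ?_
  have hswap :=
    Wpp_le_integral (p := p) (μ := ν) (ν := μ) (π := π.map MeasurableEquiv.prodComm)
    (by rw [Measure.map_map measurable_fst MeasurableEquiv.prodComm.measurable]; exact h₂)
    (by rw [Measure.map_map measurable_snd MeasurableEquiv.prodComm.measurable]; exact h₁)
  rw [integral_map_equiv] at hswap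
  simpa [MeasurableEquiv.prodComm, norm_sub_rev] using hswap

lemma ae_norm_le_of_map_eq {π : Measure (E × E)} (h₁ : π.map Prod.fst = μ)
    (h₂ : π.map Prod.snd = ν) (hμ : ∀ᵐ x ∂μ, ‖x‖ ≤ M) (hν : ∀ᵐ x ∂ν, ‖x‖ ≤ M) :
    ∀ᵐ z ∂π, ‖z.1‖ ≤ M ∧ ‖z.2‖ ≤ M :=
  (ae_of_ae_map measurable_fst.aemeasurable (h₁ ▸ hμ)).and
    (ae_of_ae_map measurable_snd.aemeasurable (h₂ ▸ hν))

section Borel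

variable [BorelSpace E] [SecondCountableTopology E]

lemma measurable_norm_sub_rpow (p : ℝ) : Measurable fun z : E × E => ‖z.1 - z.2‖ ^ p := by
  fun_prop

lemma integrable_norm_sub_rpow {π : Measure (E × E)} [IsFiniteMeasure π] (hp : 0 ≤ p)
    (h : ∀ᵐ z ∂π, ‖z.1‖ ≤ M ∧ ‖z.2‖ ≤ M) : Integrable (fun z => ‖z.1 - z.2‖ ^ p) π := by
  refine (integrable_const ((2 * M) ^ p)).mono'
    (measurable_norm_sub_rpow p).aestronglyMeasurable ?_
  filter_upwards [h] with z hz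
  rw [Real.norm_of_nonneg (by positivity)]
  exact Real.rpow_le_rpow (norm_nonneg _) ((norm_sub_le _ _).trans (by linarith)) hp

lemma Wpp_map_le_integral {X : Type*} [MeasurableSpace X] (μ : Measure X) {f g : X → E}
    (hf : Measurable f) (hg : Measurable g) :
    Wpp p (μ.map f) (μ.map g) ≤ ∫ x, ‖f x - g x‖ ^ p ∂μ := by
  have hfg : Measurable fun x => (f x, g x) := hf.prodMk hg
  refine (Wpp_le_integral (π := μ.map fun x => (f x, g x)) ?_ ?_).trans_eq ?_
  · rw [Measure.map_map measurable_fst hfg]; rfl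
  · rw [Measure.map_map measurable_snd hfg]; rfl
  · exact integral_map hfg.aemeasurable (measurable_norm_sub_rpow p).aestronglyMeasurable

variable [CompleteSpace E]

lemma Wpp_le_integral_add_mul_integral (hp : 1 ≤ p) {α β γ : Measure E}
    [IsProbabilityMeasure α]
    (hα : ∀ᵐ x ∂α, ‖x‖ ≤ M) (hβ : ∀ᵐ x ∂β, ‖x‖ ≤ M) (hγ : ∀ᵐ x ∂γ, ‖x‖ ≤ M)
    {κ π : Measure (E × E)} (hκ₁ : κ.map Prod.fst = α) (hκ₂ : κ.map Prod.snd = β)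
    (hπ₁ : π.map Prod.fst = α) (hπ₂ : π.map Prod.snd = γ) :
    Wpp p β γ ≤
      ∫ z, ‖z.1 - z.2‖ ^ p ∂π + p * (2 * M) ^ (p - 1) * ∫ z, ‖z.1 - z.2‖ ^ (1 : ℝ) ∂κ := by
  have : IsProbabilityMeasure κ :=
    (Measure.isProbabilityMeasure_map_iff measurable_fst.aemeasurable).1 (hκ₁ ▸ inferInstance)
  have : IsProbabilityMeasure π :=
    (Measure.isProbabilityMeasure_map_iff measurable_fst.aemeasurable).1 (hπ₁ ▸ inferInstance)
  obtain ⟨ρ, hρκ, hρπ⟩ := exists_glue (hκ₁.trans hπ₁.symm)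
  have hκ : Measurable (Prod.map id Prod.fst : E × E × E → E × E) := by fun_prop
  have hπ : Measurable (Prod.map id Prod.snd : E × E × E → E × E) := by fun_prop
  have hβγ₁ : (ρ.map Prod.snd).map Prod.fst = β := by
    rw [Measure.map_map measurable_fst measurable_snd, ← hκ₂, ← hρκ,
      Measure.map_map measurable_snd hκ]
    rfl
  have hβγ₂ : (ρ.map Prod.snd).map Prod.snd = γ := by
    rw [Measure.map_map measurable_snd measurable_snd, ← hπ₂, ← hρπ,
      Measure.map_map measurable_snd hπ]
    rfl
  have hbdκ := ae_of_ae_map hκ.aemeasurable (hρκ ▸ ae_norm_le_of_map_eq hκ₁ hκ₂ hα hβ)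
  have hbdπ := ae_of_ae_map hπ.aemeasurable (hρπ ▸ ae_norm_le_of_map_eq hπ₁ hπ₂ hα hγ)
  have hintπ : Integrable (fun z : E × E × E => ‖z.1 - z.2.2‖ ^ p) ρ :=
    (integrable_map_measure (measurable_norm_sub_rpow p).aestronglyMeasurable hπ.aemeasurable).1
      (hρπ ▸ integrable_norm_sub_rpow (by linarith) (ae_norm_le_of_map_eq hπ₁ hπ₂ hα hγ))
  have hintκ : Integrable (fun z : E × E × E => ‖z.1 - z.2.1‖ ^ (1 : ℝ)) ρ :=
    (integrable_map_measure (measurable_norm_sub_rpow 1).aestronglyMeasurable hκ.aemeasurable).1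
      (hρκ ▸ integrable_norm_sub_rpow zero_le_one (ae_norm_le_of_map_eq hκ₁ hκ₂ hα hβ))
  calc Wpp p β γ ≤ ∫ z, ‖z.2.1 - z.2.2‖ ^ p ∂ρ :=
        (Wpp_le_integral hβγ₁ hβγ₂).trans_eq (integral_map measurable_snd.aemeasurable
          (measurable_norm_sub_rpow p).aestronglyMeasurable)
    _ ≤ ∫ z, (‖z.1 - z.2.2‖ ^ p + p * (2 * M) ^ (p - 1) * ‖z.1 - z.2.1‖ ^ (1 : ℝ)) ∂ρ := by
        refine integral_mono_of_nonneg (ae_of_all _ fun _ => by positivity)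
          (hintπ.add (hintκ.const_mul _)) ?_
        filter_upwards [hbdκ, hbdπ] with z hzκ hzπ
        rw [Real.rpow_one]
        exact norm_sub_rpow_le_add hp hzκ.1 hzκ.2 hzπ.2
    _ = ∫ z, ‖z.1 - z.2‖ ^ p ∂π +
          p * (2 * M) ^ (p - 1) * ∫ z, ‖z.1 - z.2‖ ^ (1 : ℝ) ∂κ := by
        rw [integral_add hintπ (hintκ.const_mul _), integral_const_mul, ← hρπ, ← hρκ,
          integral_map hπ.aemeasurable (measurable_norm_sub_rpow p).aestronglyMeasurable,
          integral_map hκ.aemeasurable (measurable_norm_sub_rpow 1).aestronglyMeasurable]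
        rfl

lemma Wpp_le_add_mul_Wpp_one (hp : 1 ≤ p) {α β γ : Measure E}
    [IsProbabilityMeasure α] [IsProbabilityMeasure β] [IsProbabilityMeasure γ]
    (hα : ∀ᵐ x ∂α, ‖x‖ ≤ M) (hβ : ∀ᵐ x ∂β, ‖x‖ ≤ M) (hγ : ∀ᵐ x ∂γ, ‖x‖ ≤ M) :
    Wpp p β γ ≤ Wpp p α γ + p * (2 * M) ^ (p - 1) * Wpp 1 α β := by
  have hM := nonneg_of_ae_norm_le hα
  have hL : 0 ≤ p * (2 * M) ^ (p - 1) := mul_nonneg (by linarith) (by positivity)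
  suffices Wpp p β γ - Wpp p α γ ≤ p * (2 * M) ^ (p - 1) * Wpp 1 α β by linarith
  refine le_mul_Wpp hL fun κ hκ₁ hκ₂ => ?_
  suffices Wpp p β γ - p * (2 * M) ^ (p - 1) * ∫ z, ‖z.1 - z.2‖ ^ (1 : ℝ) ∂κ ≤ Wpp p α γ by
    linarith
  exact le_Wpp fun π hπ₁ hπ₂ => by
    linarith [Wpp_le_integral_add_mul_integral hp hα hβ hγ hκ₁ hκ₂ hπ₁ hπ₂]

lemma abs_Wpp_sub_Wpp_le (hp : 1 ≤ p) {α β γ : Measure E}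
    [IsProbabilityMeasure α] [IsProbabilityMeasure β] [IsProbabilityMeasure γ]
    (hα : ∀ᵐ x ∂α, ‖x‖ ≤ M) (hβ : ∀ᵐ x ∂β, ‖x‖ ≤ M) (hγ : ∀ᵐ x ∂γ, ‖x‖ ≤ M) :
    |Wpp p β γ - Wpp p α γ| ≤ p * (2 * M) ^ (p - 1) * Wpp 1 α β := by
  rw [abs_sub_le_iff]
  constructor
  · linarith [Wpp_le_add_mul_Wpp_one hp hα hβ hγ]
  · have := Wpp_le_add_mul_Wpp_one hp hβ hα hγ
    rw [Wpp_comm (p := 1) (μ := β)] at this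
    linarith

end Borel

end Wasserstein

lemma abs_integral_sub_integral_le {Θ : Type*} [MeasurableSpace Θ] {σ : Measure Θ}
    [IsZeroOrProbabilityMeasure σ] {f g : Θ → ℝ} (hf : Integrable f σ) (hg : Integrable g σ)
    {C : ℝ} (hC : 0 ≤ C) (h : ∀ θ, |f θ - g θ| ≤ C) : |∫ θ, f θ ∂σ - ∫ θ, g θ ∂σ| ≤ C := by
  rw [← integral_sub hf hg, ← Real.norm_eq_abs]
  exact (norm_integral_le_of_norm_le_const (ae_of_all _ h)).trans
    (mul_le_of_le_one_right hC measureReal_le_one)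

lemma abs_ciSup_sub_ciSup_le {ι : Type*} {f g : ι → ℝ} (hf : BddAbove (range f))
    (hg : BddAbove (range g)) {C : ℝ} (hC : 0 ≤ C) (h : ∀ i, |f i - g i| ≤ C) :
    |(⨆ i, f i) - ⨆ i, g i| ≤ C := by
  rcases isEmpty_or_nonempty ι with hι | hι
  · simpa [Real.iSup_of_isEmpty] using hC
  rw [abs_sub_le_iff, sub_le_iff_le_add, sub_le_iff_le_add]
  constructor <;> refine ciSup_le fun i => ?_
  · linarith [(abs_le.1 (h i)).2, le_ciSup hg i]
  · linarith [(abs_le.1 (h i)).1, le_ciSup hf i]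

section Sliced

instance isProbabilityMeasure_projMeasure (θ : sphere (0 : EuclideanSpace ℝ (Fin d)) 1)
    (μ : Measure (EuclideanSpace ℝ (Fin d))) [IsProbabilityMeasure μ] :
    IsProbabilityMeasure (projMeasure θ μ) :=
  Measure.isProbabilityMeasure_map (by fun_prop)

instance : IsZeroOrProbabilityMeasure (unifSphere d) := by
  unfold unifSphere
  infer_instance

variable {p M : ℝ} {μ ν : Measure (EuclideanSpace ℝ (Fin d))}

lemma ae_norm_le_projMeasure (hμ : ∀ᵐ x ∂μ, ‖x‖ ≤ M)
    (θ : sphere (0 : EuclideanSpace ℝ (Fin d)) 1) :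
    ∀ᵐ t ∂projMeasure θ μ, ‖t‖ ≤ M := by
  refine (ae_map_iff (by fun_prop) (measurableSet_le measurable_norm measurable_const)).2 ?_
  filter_upwards [hμ] with x hx
  calc _ ≤ ‖(θ : EuclideanSpace ℝ (Fin d))‖ * ‖x‖ := norm_inner_le_norm _ _
    _ ≤ M := by rwa [norm_eq_of_mem_sphere θ, one_mul]

lemma Wpp_one_projMeasure_le [IsProbabilityMeasure μ] (hμ : ∀ᵐ x ∂μ, ‖x‖ ≤ M)
    (θ θ' : sphere (0 : EuclideanSpace ℝ (Fin d)) 1) :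
    Wpp 1 (projMeasure θ μ) (projMeasure θ' μ) ≤ M * dist θ θ' := by
  calc _ ≤ ∫ x, ‖inner ℝ (θ : EuclideanSpace ℝ (Fin d)) x -
          inner ℝ (θ' : EuclideanSpace ℝ (Fin d)) x‖ ^ (1 : ℝ) ∂μ :=
        Wpp_map_le_integral μ (by fun_prop) (by fun_prop)
    _ ≤ ∫ _, M * dist θ θ' ∂μ := by
        refine integral_mono_of_nonneg (ae_of_all _ fun _ => by positivity)
          (integrable_const _) ?_
        filter_upwards [hμ] with x hx
        rw [Real.rpow_one, ← inner_sub_left, Subtype.dist_eq, dist_eq_norm, mul_comm]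
        exact (norm_inner_le_norm _ _).trans (mul_le_mul_of_nonneg_left hx (norm_nonneg _))
    _ = M * dist θ θ' := by simp

lemma lipschitzWith_Wpp_projMeasure (hp : 1 ≤ p)
    [IsProbabilityMeasure μ] [IsProbabilityMeasure ν]
    (hμ : ∀ᵐ x ∂μ, ‖x‖ ≤ M) (hν : ∀ᵐ x ∂ν, ‖x‖ ≤ M) :
    LipschitzWith (2 * p * (2 * M) ^ (p - 1) * M).toNNReal
      fun θ : sphere (0 : EuclideanSpace ℝ (Fin d)) 1 =>
        Wpp p (projMeasure θ μ) (projMeasure θ ν) := by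
  have hM := nonneg_of_ae_norm_le hμ
  have hL : 0 ≤ p * (2 * M) ^ (p - 1) := mul_nonneg (by linarith) (by positivity)
  refine LipschitzWith.of_dist_le_mul fun θ θ' => ?_
  have hμθ := ae_norm_le_projMeasure hμ θ
  have hμθ' := ae_norm_le_projMeasure hμ θ'
  have hνθ := ae_norm_le_projMeasure hν θ
  have hνθ' := ae_norm_le_projMeasure hν θ'
  have hstepμ := abs_Wpp_sub_Wpp_le hp hμθ' hμθ hνθ
  have hstepν := abs_Wpp_sub_Wpp_le hp hνθ hνθ' hμθ'
  rw [Wpp_comm (μ := projMeasure θ' ν), Wpp_comm (μ := projMeasure θ ν),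
    abs_sub_comm] at hstepν
  have hμθθ' := Wpp_one_projMeasure_le hμ θ' θ
  have hνθθ' := Wpp_one_projMeasure_le hν θ θ'
  rw [dist_comm] at hμθθ'
  have := mul_le_mul_of_nonneg_left hμθθ' hL
  have := mul_le_mul_of_nonneg_left hνθθ' hL
  rw [Real.coe_toNNReal _ (by positivity), Real.dist_eq]
  linarith [abs_sub_le (Wpp p (projMeasure θ μ) (projMeasure θ ν))
    (Wpp p (projMeasure θ' μ) (projMeasure θ ν)) (Wpp p (projMeasure θ' μ) (projMeasure θ' ν))]

end Sliced

theorem stmt4_general (p M : ℝ) (hp : 1 ≤ p) (hM : 0 < M)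
    (μ₀ μ₁ ν : Measure (EuclideanSpace ℝ (Fin d)))
    [IsProbabilityMeasure μ₀] [IsProbabilityMeasure μ₁] [IsProbabilityMeasure ν]
    (hμ₀ : μ₀ (ball (0 : EuclideanSpace ℝ (Fin d)) M)ᶜ = 0)
    (hμ₁ : μ₁ (ball (0 : EuclideanSpace ℝ (Fin d)) M)ᶜ = 0)
    (hν : ν (ball (0 : EuclideanSpace ℝ (Fin d)) M)ᶜ = 0) :
    |avgSlicedWpp p μ₁ ν - avgSlicedWpp p μ₀ ν| ≤
        p * 2 ^ (p - 1) * M ^ (p - 1) * maxSlicedWpp 1 μ₀ μ₁ ∧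
    |maxSlicedWpp p μ₁ ν - maxSlicedWpp p μ₀ ν| ≤
        p * 2 ^ (p - 1) * M ^ (p - 1) * maxSlicedWpp 1 μ₀ μ₁ := by
  have hμ₀' := ae_norm_le_of_measure_compl_ball_eq_zero hμ₀
  have hμ₁' := ae_norm_le_of_measure_compl_ball_eq_zero hμ₁
  have hν' := ae_norm_le_of_measure_compl_ball_eq_zero hν
  have hg₀ := (lipschitzWith_Wpp_projMeasure hp hμ₀' hν').continuous
  have hg₁ := (lipschitzWith_Wpp_projMeasure hp hμ₁' hν').continuous
  have hw := (lipschitzWith_Wpp_projMeasure le_rfl hμ₀' hμ₁').continuous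
  have hL : 0 ≤ p * (2 * M) ^ (p - 1) := mul_nonneg (by linarith) (by positivity)
  have hW : 0 ≤ maxSlicedWpp 1 μ₀ μ₁ := Real.iSup_nonneg fun _ => Wpp_nonneg
  have hslice : ∀ θ, |Wpp p (projMeasure θ μ₁) (projMeasure θ ν) -
      Wpp p (projMeasure θ μ₀) (projMeasure θ ν)| ≤
        p * (2 * M) ^ (p - 1) * maxSlicedWpp 1 μ₀ μ₁ := fun θ =>
    (abs_Wpp_sub_Wpp_le hp (ae_norm_le_projMeasure hμ₀' θ) (ae_norm_le_projMeasure hμ₁' θ)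
      (ae_norm_le_projMeasure hν' θ)).trans
        (mul_le_mul_of_nonneg_left (le_ciSup (isCompact_range hw).bddAbove θ) hL)
  rw [mul_assoc p, ← Real.mul_rpow zero_le_two hM.le]
  exact ⟨abs_integral_sub_integral_le (hg₁.integrable_of_hasCompactSupport (.of_compactSpace _))
      (hg₀.integrable_of_hasCompactSupport (.of_compactSpace _)) (mul_nonneg hL hW) hslice,
    abs_ciSup_sub_ciSup_le (isCompact_range hg₁).bddAbove (isCompact_range hg₀).bddAbove
      (mul_nonneg hL hW) hslice⟩

/-- For 1 ≤ p < ∞ and μ₀, μ₁, ν supported in B(0,M), both the average-sliced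
and the max-sliced p-Wasserstein p-th powers are Lipschitz in the max-sliced W₁ distance:
|W̲_p^p(μᵢ,ν) − W̲_p^p(μ₀,ν)| ∨ |W̄_p^p(μ₁,ν) − W̄_p^p(μ₀,ν)| ≤ p·2^(p−1)·M^(p−1)·W̄₁(μ₀,μ₁). -/
theorem stmt4 (p M : ℝ) (hp : 1 ≤ p) (hM : 0 < M) (hd : 0 < d)
    (μ₀ μ₁ ν : Measure (EuclideanSpace ℝ (Fin d)))
    [IsProbabilityMeasure μ₀] [IsProbabilityMeasure μ₁] [IsProbabilityMeasure ν]
    (hμ₀ : μ₀ (ball (0 : EuclideanSpace ℝ (Fin d)) M)ᶜ = 0)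
    (hμ₁ : μ₁ (ball (0 : EuclideanSpace ℝ (Fin d)) M)ᶜ = 0)
    (hν : ν (ball (0 : EuclideanSpace ℝ (Fin d)) M)ᶜ = 0) :
    |avgSlicedWpp p μ₁ ν - avgSlicedWpp p μ₀ ν| ≤
        p * 2 ^ (p - 1) * M ^ (p - 1) * maxSlicedWpp 1 μ₀ μ₁ ∧
    |maxSlicedWpp p μ₁ ν - maxSlicedWpp p μ₀ ν| ≤
        p * 2 ^ (p - 1) * M ^ (p - 1) * maxSlicedWpp 1 μ₀ μ₁ :=
  stmt4_general p M hp hM μ₀ μ₁ ν hμ₀ hμ₁ hν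
end
end

section
/- Let 1 ≤ p < ∞, let μ ∈ 𝒫(ℝ^d) have compact support, and let A ⊂ ℝ^d be a bounded Borel set with μ(A) > 0. Then W_p^p(μ|_A, μ) ≤ (1/μ(A) − 1) · diam(spt(μ))^p, where μ|_A = μ(· | A) is the conditional probability measure of μ given A. -/
/-!
Couple `μ(· | A)` with `μ` by leaving the mass `μ.restrict A` in place and sending the
remaining mass `(μ(Aᶜ) / μ(A)) · μ(· | A)` of the conditional measure, independently, onto
`μ.restrict Aᶜ`. The first part costs nothing; the second moves total mass `μ(Aᶜ) = 1 - μ(A)`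
between points of `spt μ`, at cost at most `diam(spt μ)^p` per unit. Finally
`1 - a ≤ 1/a - 1` for `a > 0`.
-/

open MeasureTheory Metric

noncomputable section

/-- The topological support of a Borel measure. -/
def msupport {X : Type*} [TopologicalSpace X] [MeasurableSpace X] (μ : Measure X) : Set X :=
  {x | ∀ U : Set X, IsOpen U → x ∈ U → 0 < μ U}

lemma ae_mem_msupport {X : Type*} [TopologicalSpace X] [MeasurableSpace X]
    [SecondCountableTopology X] (μ : Measure X) : ∀ᵐ x ∂μ, x ∈ msupport μ := by
  change μ (msupport μ)ᶜ = 0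
  obtain ⟨b, hbc, -, hb⟩ := TopologicalSpace.exists_countable_basis X
  have hsub : (msupport μ)ᶜ ⊆ ⋃₀ {v | v ∈ b ∧ μ v = 0} := by
    intro x hx
    simp only [msupport, Set.mem_compl_iff, Set.mem_ofPred_eq, not_forall, not_lt,
      nonpos_iff_eq_zero] at hx
    obtain ⟨U, hU, hxU, hU0⟩ := hx
    obtain ⟨v, hvb, hxv, hvU⟩ := hb.exists_subset_of_mem_open hxU hU
    exact ⟨v, ⟨hvb, measure_mono_null hvU hU0⟩, hxv⟩
  exact measure_mono_null hsub <|
    (measure_sUnion_null_iff (hbc.mono fun v hv => hv.1)).2 fun s hs => hs.2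

lemma one_sub_le_inv_sub_one {a : ℝ} (ha : 0 < a) : 1 - a ≤ a⁻¹ - 1 := by
  have : 0 ≤ (a - 1) ^ 2 / a := by positivity
  have h : (a - 1) ^ 2 / a = a⁻¹ - 1 - (1 - a) := by field_simp; ring
  linarith

section Wasserstein

variable {E : Type*} [NormedAddCommGroup E] [MeasurableSpace E]

lemma Wpp_le_integral_of_map_eq {p : ℝ} {μ ν : Measure E} {π : Measure (E × E)}
    (hfst : π.map Prod.fst = μ) (hsnd : π.map Prod.snd = ν) :
    Wpp p μ ν ≤ ∫ z, ‖z.1 - z.2‖ ^ p ∂π := by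
  refine csInf_le ⟨0, ?_⟩ ⟨π, hfst, hsnd, rfl⟩
  rintro r ⟨π', -, -, rfl⟩
  exact integral_nonneg fun z => Real.rpow_nonneg (norm_nonneg _) p

lemma ae_norm_sub_rpow_eq_zero {p : ℝ} (hp : p ≠ 0) {π : Measure (E × E)}
    (h : ∀ᵐ z ∂π, z.1 = z.2) : (fun z : E × E => ‖z.1 - z.2‖ ^ p) =ᵐ[π] 0 :=
  h.mono fun z hz => by simp [hz, Real.zero_rpow hp]

lemma ae_norm_sub_rpow_le_diam_rpow {p : ℝ} (hp : 0 ≤ p) {S : Set E}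
    (hS : Bornology.IsBounded S) {π : Measure (E × E)} (h : ∀ᵐ z ∂π, z.1 ∈ S ∧ z.2 ∈ S) :
    ∀ᵐ z ∂π, ‖z.1 - z.2‖ ^ p ≤ diam S ^ p :=
  h.mono fun z hz => Real.rpow_le_rpow (norm_nonneg _)
    (dist_eq_norm z.1 z.2 ▸ dist_le_diam_of_mem hS hz.1 hz.2) hp

end Wasserstein

section TruncationCoupling

open ProbabilityTheory

variable {α : Type*} [MeasurableSpace α]

def truncationCoupling (μ : Measure α) (A : Set α) : Measure (α × α) :=
  (μ.restrict A).map (fun x => (x, x)) + μ[|A].prod (μ.restrict Aᶜ)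

variable {μ : Measure α} {A : Set α}

lemma truncationCoupling_map_fst [IsProbabilityMeasure μ] (hAm : MeasurableSet A)
    (hA : μ A ≠ 0) :
    (truncationCoupling μ A).map Prod.fst = μ[|A] := by
  have hdiag : Measurable fun x : α => (x, x) := measurable_id.prodMk measurable_id
  rw [truncationCoupling, Measure.map_add _ _ measurable_fst,
    Measure.map_map measurable_fst hdiag, show Prod.fst ∘ (fun x : α => (x, x)) = id from rfl,
    Measure.map_id, Measure.map_fst_prod, Measure.restrict_apply_univ, ProbabilityTheory.cond,
    smul_smul]
  calc μ.restrict A + (μ Aᶜ * (μ A)⁻¹) • μ.restrict A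
      = ((μ A + μ Aᶜ) * (μ A)⁻¹) • μ.restrict A := by
        rw [add_mul, add_smul, ENNReal.mul_inv_cancel hA (measure_ne_top μ A), one_smul]
    _ = (μ A)⁻¹ • μ.restrict A := by
        rw [measure_add_measure_compl hAm, measure_univ, one_mul]

lemma truncationCoupling_map_snd [IsFiniteMeasure μ] (hAm : MeasurableSet A) (hA : μ A ≠ 0) :
    (truncationCoupling μ A).map Prod.snd = μ := by
  have := cond_isProbabilityMeasure (μ := μ) hA
  have hdiag : Measurable fun x : α => (x, x) := measurable_id.prodMk measurable_id
  rw [truncationCoupling, Measure.map_add _ _ measurable_snd,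
    Measure.map_map measurable_snd hdiag, show Prod.snd ∘ (fun x : α => (x, x)) = id from rfl,
    Measure.map_id, Measure.map_snd_prod, measure_univ, one_smul]
  exact Measure.restrict_add_restrict_compl hAm

lemma integral_truncationCoupling_le {E : Type*} [NormedAddCommGroup E] [MeasurableSpace E]
    [BorelSpace E] [SecondCountableTopology E] {p : ℝ} (hp : 0 < p) {μ : Measure E}
    [IsFiniteMeasure μ] {A S : Set E} (hA : μ A ≠ 0) (hS : Bornology.IsBounded S)
    (hμS : ∀ᵐ x ∂μ, x ∈ S) :
    ∫ z, ‖z.1 - z.2‖ ^ p ∂truncationCoupling μ A ≤ diam S ^ p * μ.real Aᶜ := by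
  have := cond_isProbabilityMeasure (μ := μ) hA
  have hdiag : Measurable fun x : E => (x, x) := measurable_id.prodMk measurable_id
  have hcost : Measurable fun z : E × E => ‖z.1 - z.2‖ ^ p :=
    (measurable_fst.sub measurable_snd).norm.pow_const p
  have hstay : ∀ᵐ z ∂(μ.restrict A).map (fun x => (x, x)), z.1 = z.2 :=
    (ae_map_iff hdiag.aemeasurable measurableSet_diagonal).2 (.of_forall fun _ => rfl)
  have hmove : ∀ᵐ z ∂μ[|A].prod (μ.restrict Aᶜ), z.1 ∈ S ∧ z.2 ∈ S :=
    (Measure.quasiMeasurePreserving_fst.ae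
      (Measure.ae_smul_measure (ae_restrict_of_ae hμS) _)).and
        (Measure.quasiMeasurePreserving_snd.ae (ae_restrict_of_ae hμS))
  have hzero := ae_norm_sub_rpow_eq_zero hp.ne' hstay
  have hbound := ae_norm_sub_rpow_le_diam_rpow hp.le hS hmove
  have hint : Integrable (fun z : E × E => ‖z.1 - z.2‖ ^ p) (μ[|A].prod (μ.restrict Aᶜ)) :=
    (integrable_const _).mono' hcost.aestronglyMeasurable <| hbound.mono fun z hz => by
      rwa [Real.norm_of_nonneg (by positivity)]
  rw [truncationCoupling, integral_add_measure ((integrable_zero ..).congr hzero.symm) hint,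
    integral_congr_ae hzero, Pi.zero_def, integral_zero, zero_add]
  calc _ ≤ ∫ _, diam S ^ p ∂μ[|A].prod (μ.restrict Aᶜ) :=
        integral_mono_of_nonneg (.of_forall fun _ => by positivity) (integrable_const _) hbound
    _ = _ := by
        rw [integral_const, smul_eq_mul, mul_comm, measureReal_def, ← Set.univ_prod_univ,
          Measure.prod_prod, measure_univ, one_mul, Measure.restrict_apply_univ, measureReal_def]

end TruncationCoupling

theorem stmt11_general {d : ℕ} (p : ℝ) (hp : 1 ≤ p)
    (μ : Measure (EuclideanSpace ℝ (Fin d))) [IsProbabilityMeasure μ]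
    (hcs : IsCompact (msupport μ))
    (A : Set (EuclideanSpace ℝ (Fin d))) (hA : MeasurableSet A)
    (hApos : 0 < μ A) :
    Wpp p ((μ A)⁻¹ • μ.restrict A) μ ≤
      ((μ A).toReal⁻¹ - 1) * (Metric.diam (msupport μ)) ^ p := by
  calc Wpp p ((μ A)⁻¹ • μ.restrict A) μ
      ≤ ∫ z, ‖z.1 - z.2‖ ^ p ∂truncationCoupling μ A :=
        Wpp_le_integral_of_map_eq (truncationCoupling_map_fst hA hApos.ne')
          (truncationCoupling_map_snd hA hApos.ne')
    _ ≤ diam (msupport μ) ^ p * μ.real Aᶜ :=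
        integral_truncationCoupling_le (by linarith) hApos.ne' hcs.isBounded (ae_mem_msupport μ)
    _ = (1 - (μ A).toReal) * diam (msupport μ) ^ p := by
        rw [probReal_compl_eq_one_sub hA, mul_comm, measureReal_def]
    _ ≤ _ := mul_le_mul_of_nonneg_right
        (one_sub_le_inv_sub_one (ENNReal.toReal_pos hApos.ne' (measure_ne_top μ A)))
        (by positivity)

/-- Truncation error bound for compactly supported μ:
W_p^p(μ|_A, μ) ≤ (1/μ(A) − 1)·diam(spt μ)^p, where μ|_A is the conditional measure of μ on A. -/
theorem stmt11 {d : ℕ} (p : ℝ) (hp : 1 ≤ p)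
    (μ : Measure (EuclideanSpace ℝ (Fin d))) [IsProbabilityMeasure μ]
    (hcs : IsCompact (msupport μ))
    (A : Set (EuclideanSpace ℝ (Fin d))) (hA : MeasurableSet A)
    (hAb : Bornology.IsBounded A) (hApos : 0 < μ A) :
    Wpp p ((μ A)⁻¹ • μ.restrict A) μ ≤
      ((μ A).toReal⁻¹ - 1) * (Metric.diam (msupport μ)) ^ p :=
  stmt11_general p hp μ hcs A hA hApos
end
end

section
/- Let 𝒳 ⊂ ℝ^d be compact, 1 < p < ∞, σ > 0. For μ ∈ 𝒫(𝒳), let S_p^{(σ)}(μ,ν) = W_p^p(μ∗η_σ, ν∗η_σ). Then for all μ₀, μ₁, ν ∈ 𝒫(𝒳): |S_p^{(σ)}(μ₁,ν) − S_p^{(σ)}(μ₀,ν)| ≤ √(λ(𝒳_σ)) · diam(𝒳_σ)^p · sup_{f ∈ B} |∫ f d((μ₁−μ₀)∗η_σ)|, where B is the unit ball of L²(𝒳_σ), 𝒳_σ = 𝒳 + B̄(0,σ), and λ is Lebesgue measure. -/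
open MeasureTheory Metric
open scoped Pointwise ENNReal

noncomputable section

open ProbabilityTheory

section Aux

variable {d : ℕ}
local notation "Euc" => EuclideanSpace ℝ (Fin d)

lemma conv_density (μ : Measure Euc) [SFinite μ] (χ : Euc → ℝ) (hχ : Continuous χ) :
    μ.conv (volume.withDensity fun x => ENNReal.ofReal (χ x)) =
      volume.withDensity (fun z => ∫⁻ x, ENNReal.ofReal (χ (z - x)) ∂μ) := by
  have hm : Measurable fun x : Euc => ENNReal.ofReal (χ x) :=
    ENNReal.measurable_ofReal.comp hχ.measurable
  have haddm : Measurable fun q : Euc × Euc => q.1 + q.2 := measurable_add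
  ext A hA
  rw [Measure.conv, Measure.map_apply haddm hA, Measure.prod_apply (haddm hA)]
  have hslice : ∀ x : Euc, (volume.withDensity fun y => ENNReal.ofReal (χ y))
      (Prod.mk x ⁻¹' ((fun q : Euc × Euc => q.1 + q.2) ⁻¹' A)) =
      ∫⁻ z, A.indicator (fun _ => (1:ℝ≥0∞)) z * ENNReal.ofReal (χ (z - x)) := by
    intro x
    have hAx : MeasurableSet {y : Euc | x + y ∈ A} := (measurable_const_add x) hA
    rw [show (Prod.mk x ⁻¹' ((fun q : Euc × Euc => q.1 + q.2) ⁻¹' A)) = {y : Euc | x + y ∈ A} from rfl,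
      withDensity_apply _ hAx]
    have hmp := measurePreserving_add_left (volume : Measure Euc) x
    have hcomp := hmp.lintegral_comp (f := fun z => A.indicator (fun _ => (1:ℝ≥0∞)) z *
      ENNReal.ofReal (χ (z - x)))
      (((measurable_one.indicator hA).mul (ENNReal.measurable_ofReal.comp
        (hχ.measurable.comp (measurable_sub_const x)))))
    rw [← hcomp, ← lintegral_indicator hAx]
    refine lintegral_congr fun a => ?_
    by_cases h : x + a ∈ A <;>
      simp [Set.indicator, h, add_sub_cancel_left]
  simp_rw [hslice]
  rw [lintegral_lintegral_swap (by
    exact (((measurable_one.indicator hA).comp measurable_snd).mul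
      (ENNReal.measurable_ofReal.comp (hχ.measurable.comp
        (measurable_snd.sub measurable_fst)))).aemeasurable)]
  rw [withDensity_apply _ hA, ← lintegral_indicator hA]
  refine lintegral_congr fun z => ?_
  by_cases h : z ∈ A <;> simp [Set.indicator, h]

lemma cost_cont (p : ℝ) (hp : 0 < p) :
    Continuous (fun z : Euc × Euc => ‖z.1 - z.2‖ ^ p) :=
  ((continuous_fst.sub continuous_snd).norm).rpow_const (fun z => Or.inr hp.le)

lemma conc (S : Set Euc) (hSm : MeasurableSet S) (ρ : Measure (Euc × Euc))
    (h1 : ρ.map Prod.fst Sᶜ = 0) (h2 : ρ.map Prod.snd Sᶜ = 0) :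
    ρ ((S ×ˢ S)ᶜ) = 0 := by
  rw [Measure.map_apply measurable_fst hSm.compl] at h1
  rw [Measure.map_apply measurable_snd hSm.compl] at h2
  refine measure_mono_null (fun z hz => ?_) (measure_union_null h1 h2)
  by_cases h : z.1 ∈ S
  · exact Or.inr (fun hs => hz ⟨h, hs⟩)
  · exact Or.inl h

lemma cost_ae_bound (S : Set Euc) (hS : IsCompact S) (p : ℝ) (hp : 0 < p)
    (ρ : Measure (Euc × Euc)) (hρ : ρ ((S ×ˢ S)ᶜ) = 0) :
    ∀ᵐ z ∂ρ, ENNReal.ofReal (‖z.1 - z.2‖ ^ p) ≤ ENNReal.ofReal (diam S ^ p) := by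
  refine measure_mono_null (fun z hz => ?_) hρ
  simp only [Set.mem_compl_iff, Set.mem_setOf_eq, not_le] at hz
  intro hmem
  have hd : ‖z.1 - z.2‖ ≤ diam S := by
    rw [← dist_eq_norm]
    exact dist_le_diam_of_mem hS.isBounded hmem.1 hmem.2
  exact absurd (ENNReal.ofReal_le_ofReal
    (Real.rpow_le_rpow (norm_nonneg _) hd hp.le)) (not_le.mpr hz)

lemma cost_lintegral_le (S : Set Euc) (hS : IsCompact S) (p : ℝ) (hp : 0 < p)
    (ρ : Measure (Euc × Euc)) (hρ : ρ ((S ×ˢ S)ᶜ) = 0) :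
    ∫⁻ z, ENNReal.ofReal (‖z.1 - z.2‖ ^ p) ∂ρ ≤ ENNReal.ofReal (diam S ^ p) * ρ Set.univ := by
  calc ∫⁻ z, ENNReal.ofReal (‖z.1 - z.2‖ ^ p) ∂ρ
      ≤ ∫⁻ _, ENNReal.ofReal (diam S ^ p) ∂ρ := lintegral_mono_ae (cost_ae_bound S hS p hp ρ hρ)
    _ = ENNReal.ofReal (diam S ^ p) * ρ Set.univ := lintegral_const _

lemma cost_integrable (S : Set Euc) (hS : IsCompact S) (p : ℝ) (hp : 0 < p)
    (ρ : Measure (Euc × Euc)) [IsFiniteMeasure ρ] (hρ : ρ ((S ×ˢ S)ᶜ) = 0) :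
    Integrable (fun z : Euc × Euc => ‖z.1 - z.2‖ ^ p) ρ := by
  refine ⟨(cost_cont p hp).aestronglyMeasurable, ?_⟩
  rw [hasFiniteIntegral_iff_norm]
  have : ∀ z : Euc × Euc, ENNReal.ofReal ‖‖z.1 - z.2‖ ^ p‖ = ENNReal.ofReal (‖z.1 - z.2‖ ^ p) := by
    intro z; rw [Real.norm_of_nonneg (Real.rpow_nonneg (norm_nonneg _) p)]
  simp_rw [this]
  exact lt_of_le_of_lt (cost_lintegral_le S hS p hp ρ hρ)
    (ENNReal.mul_lt_top ENNReal.ofReal_lt_top (measure_lt_top ρ _))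

lemma cost_integral_eq (p : ℝ) (hp : 0 < p) (ρ : Measure (Euc × Euc)) :
    ∫ z, ‖z.1 - z.2‖ ^ p ∂ρ = (∫⁻ z, ENNReal.ofReal (‖z.1 - z.2‖ ^ p) ∂ρ).toReal := by
  rw [integral_eq_lintegral_of_nonneg_ae
    (Filter.Eventually.of_forall fun z => Real.rpow_nonneg (norm_nonneg _) p)
    (cost_cont p hp).aestronglyMeasurable]

lemma transport_bound (S : Set Euc) (hS : IsCompact S) (hSm : MeasurableSet S)
    (p : ℝ) (hp : 0 < p)
    (g₁ g₀ : Euc → ℝ≥0∞) (hg₁ : Measurable g₁) (hg₀ : Measurable g₀)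
    (γ : Measure Euc) [IsProbabilityMeasure γ]
    [IsProbabilityMeasure (volume.withDensity g₁)]
    [IsProbabilityMeasure (volume.withDensity g₀)]
    (hαS : volume.withDensity g₁ Sᶜ = 0) (hβS : volume.withDensity g₀ Sᶜ = 0)
    (hγS : γ Sᶜ = 0) :
    Wpp p (volume.withDensity g₁) γ ≤ Wpp p (volume.withDensity g₀) γ +
      diam S ^ p * (∫⁻ x, (g₁ x - g₁ x ⊓ g₀ x)).toReal := by
  set α := volume.withDensity g₁ with hαdef
  set β := volume.withDensity g₀ with hβdef
  set h : Euc → ℝ≥0∞ := fun x => g₁ x ⊓ g₀ x with hdef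
  have hh : Measurable h := hg₁.inf hg₀
  have hint₁ : ∫⁻ x, g₁ x = 1 := by
    rw [← setLIntegral_univ, ← withDensity_apply _ MeasurableSet.univ]
    exact measure_univ
  have hint₀ : ∫⁻ x, g₀ x = 1 := by
    rw [← setLIntegral_univ, ← withDensity_apply _ MeasurableSet.univ]
    exact measure_univ
  have hinth_le : ∫⁻ x, h x ≤ 1 := hint₀ ▸ lintegral_mono fun x => inf_le_right
  have hinth_ne : ∫⁻ x, h x ≠ ⊤ := (lt_of_le_of_lt hinth_le ENNReal.one_lt_top).ne
  set m : ℝ≥0∞ := ∫⁻ x, (g₁ x - h x) with hmdef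
  have hm1 : m = 1 - ∫⁻ x, h x := by
    rw [hmdef, lintegral_sub hh hinth_ne
      (Filter.Eventually.of_forall fun x => inf_le_left), hint₁]
  have hm0 : ∫⁻ x, (g₀ x - h x) = m := by
    rw [lintegral_sub hh hinth_ne
      (Filter.Eventually.of_forall fun x => inf_le_right), hint₀, hm1]
  have hmle : m ≤ 1 := by rw [hm1]; exact tsub_le_self
  have hmne : m ≠ ⊤ := (lt_of_le_of_lt hmle ENNReal.one_lt_top).ne
  by_cases hm : m = 0
  · -- α = β
    have h1 : (fun x => g₁ x - h x) =ᵐ[volume] 0 := by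
      exact (lintegral_eq_zero_iff (hg₁.sub hh)).mp hm
    have h0 : (fun x => g₀ x - h x) =ᵐ[volume] 0 := by
      exact (lintegral_eq_zero_iff (hg₀.sub hh)).mp (hm0.trans hm)
    have hαβ : α = β := by
      rw [hαdef, hβdef]
      refine withDensity_congr_ae ?_
      filter_upwards [h1, h0] with x hx1 hx0
      have e1 : g₁ x ≤ h x := tsub_eq_zero_iff_le.mp hx1
      have e0 : g₀ x ≤ h x := tsub_eq_zero_iff_le.mp hx0
      exact le_antisymm (le_trans e1 inf_le_right) (le_trans e0 inf_le_left)
    rw [hαβ, hm]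
    simp
  · -- main case
    refine le_of_forall_pos_le_add fun ε hε => ?_
    -- the coupling set for (β, γ) is nonempty and bounded below
    have hβprob : IsProbabilityMeasure β := inferInstance
    have hne : {r | ∃ π : Measure (Euc × Euc),
        π.map Prod.fst = β ∧ π.map Prod.snd = γ ∧ r = ∫ z, ‖z.1 - z.2‖ ^ p ∂π}.Nonempty := by
      refine ⟨∫ z : Euc × Euc, ‖z.1 - z.2‖ ^ p ∂(β.prod γ), β.prod γ, ?_, ?_, rfl⟩
      · simp
      · simp
    have hbdd : BddBelow {r | ∃ π : Measure (Euc × Euc),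
        π.map Prod.fst = β ∧ π.map Prod.snd = γ ∧ r = ∫ z, ‖z.1 - z.2‖ ^ p ∂π} := by
      refine ⟨0, fun r hr => ?_⟩
      obtain ⟨π, -, -, rfl⟩ := hr
      exact integral_nonneg fun z => Real.rpow_nonneg (norm_nonneg _) p
    obtain ⟨r, hrmem, hrlt⟩ := Real.lt_sInf_add_pos hne hε
    obtain ⟨π, hπ1, hπ2, hreq⟩ := hrmem
    have hπuniv : π Set.univ = 1 := by
      have h2 := Measure.map_apply (μ := π) measurable_fst MeasurableSet.univ
      rw [Set.preimage_univ] at h2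
      rw [← h2, hπ1, measure_univ]
    haveI hπprob : IsProbabilityMeasure π := ⟨hπuniv⟩
    set κ := π.condKernel with hκdef
    have hπdis : π.fst ⊗ₘ κ = π := π.disintegrate κ
    have hπfst : π.fst = β := hπ1
    set β' := volume.withDensity h with hβ'def
    set r₁ := volume.withDensity (fun x => g₁ x - h x) with hr₁def
    set r₀ := volume.withDensity (fun x => g₀ x - h x) with hr₀def
    have hαdec : β' + r₁ = α := by
      rw [hβ'def, hr₁def, hαdef, ← withDensity_add_left hh]
      congr 1
      funext x
      exact add_tsub_cancel_of_le inf_le_left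
    have hβdec : β' + r₀ = β := by
      rw [hβ'def, hr₀def, hβdef, ← withDensity_add_left hh]
      congr 1
      funext x
      exact add_tsub_cancel_of_le inf_le_right
    have hβ'univ : β' Set.univ = ∫⁻ x, h x := by
      rw [hβ'def, withDensity_apply _ MeasurableSet.univ, setLIntegral_univ]
    have hr₁univ : r₁ Set.univ = m := by
      rw [hr₁def, withDensity_apply _ MeasurableSet.univ, setLIntegral_univ, hmdef]
    have hr₀univ : r₀ Set.univ = m := by
      rw [hr₀def, withDensity_apply _ MeasurableSet.univ, setLIntegral_univ, hm0]
    haveI hβ'fin : IsFiniteMeasure β' :=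
      ⟨by rw [hβ'univ]; exact lt_of_le_of_lt hinth_le ENNReal.one_lt_top⟩
    haveI hr₁fin : IsFiniteMeasure r₁ :=
      ⟨by rw [hr₁univ]; exact lt_of_le_of_lt hmle ENNReal.one_lt_top⟩
    haveI hr₀fin : IsFiniteMeasure r₀ :=
      ⟨by rw [hr₀univ]; exact lt_of_le_of_lt hmle ENNReal.one_lt_top⟩
    set s := (r₀ ⊗ₘ κ).snd with hsdef
    have hsuniv : s Set.univ = m := by
      rw [hsdef, Measure.snd, Measure.map_apply measurable_snd MeasurableSet.univ,
        Set.preimage_univ, Measure.compProd_apply MeasurableSet.univ]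
      simp [hr₀univ]
    set π' := β' ⊗ₘ κ + (m⁻¹ • (r₁.prod s)) with hπ'def
    have hπsum : β' ⊗ₘ κ + r₀ ⊗ₘ κ = π := by
      rw [← Measure.compProd_add_left, hβdec, ← hπfst, hπdis]
    have hmargfst : π'.map Prod.fst = α := by
      rw [hπ'def, Measure.map_add _ _ measurable_fst, Measure.map_smul]
      have h1 : (β' ⊗ₘ κ).map Prod.fst = β' := Measure.fst_compProd β' κ
      have h2 : (r₁.prod s).map Prod.fst = s Set.univ • r₁ := Measure.map_fst_prod
      rw [h1, h2, hsuniv, smul_smul, ENNReal.inv_mul_cancel hm hmne, one_smul, hαdec]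
    have hmargsnd : π'.map Prod.snd = γ := by
      rw [hπ'def, Measure.map_add _ _ measurable_snd, Measure.map_smul]
      have h2 : (r₁.prod s).map Prod.snd = r₁ Set.univ • s := Measure.map_snd_prod
      rw [h2, hr₁univ, smul_smul, ENNReal.inv_mul_cancel hm hmne, one_smul]
      have h3 : (β' ⊗ₘ κ).map Prod.snd + s = π.map Prod.snd := by
        have := Measure.snd_add (μ := β' ⊗ₘ κ) (ν := r₀ ⊗ₘ κ)
        rw [hπsum] at this
        exact this.symm
      rw [h3, hπ2]
    have hr₁S : r₁ Sᶜ = 0 := by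
      have hle : r₁ Sᶜ ≤ α Sᶜ := by
        rw [← hαdec, Measure.add_apply]; exact le_add_self
      exact le_zero_iff.mp (hαS ▸ hle)
    have hsS : s Sᶜ = 0 := by
      have hle : s Sᶜ ≤ π.snd Sᶜ := by
        rw [← hπsum, Measure.snd_add, Measure.add_apply]; exact le_add_self
      have hπsndS : π.snd Sᶜ = 0 := by
        have : π.snd = γ := hπ2
        rw [this]; exact hγS
      exact le_zero_iff.mp (hπsndS ▸ hle)
    set D := ENNReal.ofReal (diam S ^ p) with hDdef
    have hπconc : π ((S ×ˢ S)ᶜ) = 0 :=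
      conc S hSm π (by rw [hπ1]; exact hβS) (by rw [hπ2]; exact hγS)
    have hprodconc : (r₁.prod s) ((S ×ˢ S)ᶜ) = 0 := by
      refine conc S hSm _ ?_ ?_
      · rw [Measure.map_fst_prod]
        simp [hr₁S]
      · rw [Measure.map_snd_prod]
        simp [hsS]
    have hcostπ : ∫⁻ z, ENNReal.ofReal (‖z.1 - z.2‖ ^ p) ∂π ≤ D := by
      have hc := cost_lintegral_le S hS p hp π hπconc
      rwa [hπuniv, mul_one] at hc
    have hcostprod : ∫⁻ z, ENNReal.ofReal (‖z.1 - z.2‖ ^ p) ∂(r₁.prod s) ≤ D * (m * m) := by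
      have hc := cost_lintegral_le S hS p hp _ hprodconc
      rwa [← Set.univ_prod_univ, Measure.prod_prod, hr₁univ, hsuniv] at hc
    have hkey : ∫⁻ z, ENNReal.ofReal (‖z.1 - z.2‖ ^ p) ∂π' ≤
        (∫⁻ z, ENNReal.ofReal (‖z.1 - z.2‖ ^ p) ∂π) + D * m := by
      rw [hπ'def, lintegral_add_measure, lintegral_smul_measure]
      refine add_le_add ?_ ?_
      · rw [← hπsum, lintegral_add_measure]
        exact le_self_add
      · calc m⁻¹ * ∫⁻ z, ENNReal.ofReal (‖z.1 - z.2‖ ^ p) ∂(r₁.prod s)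
            ≤ m⁻¹ * (D * (m * m)) := mul_le_mul_right hcostprod _
          _ = (m⁻¹ * m) * (D * m) := by ring
          _ = D * m := by rw [ENNReal.inv_mul_cancel hm hmne, one_mul]
    have hDmne : D * m ≠ ⊤ :=
      (ENNReal.mul_lt_top ENNReal.ofReal_lt_top (lt_of_le_of_lt hmle ENNReal.one_lt_top)).ne
    have hπcost_ne : (∫⁻ z, ENNReal.ofReal (‖z.1 - z.2‖ ^ p) ∂π) ≠ ⊤ :=
      (lt_of_le_of_lt hcostπ ENNReal.ofReal_lt_top).ne
    have hfin : (∫⁻ z, ENNReal.ofReal (‖z.1 - z.2‖ ^ p) ∂π) + D * m ≠ ⊤ :=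
      ENNReal.add_ne_top.mpr ⟨hπcost_ne, hDmne⟩
    have hbddα : BddBelow {r | ∃ π : Measure (Euc × Euc),
        π.map Prod.fst = α ∧ π.map Prod.snd = γ ∧ r = ∫ z, ‖z.1 - z.2‖ ^ p ∂π} := by
      refine ⟨0, fun r hr => ?_⟩
      obtain ⟨π'', -, -, rfl⟩ := hr
      exact integral_nonneg fun z => Real.rpow_nonneg (norm_nonneg _) p
    have hWle : Wpp p α γ ≤ ∫ z, ‖z.1 - z.2‖ ^ p ∂π' :=
      csInf_le hbddα ⟨π', hmargfst, hmargsnd, rfl⟩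
    have e1 : ∫ z, ‖z.1 - z.2‖ ^ p ∂π' =
        (∫⁻ z, ENNReal.ofReal (‖z.1 - z.2‖ ^ p) ∂π').toReal := cost_integral_eq p hp π'
    have e2 : r = (∫⁻ z, ENNReal.ofReal (‖z.1 - z.2‖ ^ p) ∂π).toReal :=
      hreq.trans (cost_integral_eq p hp π)
    have hmono : (∫⁻ z, ENNReal.ofReal (‖z.1 - z.2‖ ^ p) ∂π').toReal ≤
        ((∫⁻ z, ENNReal.ofReal (‖z.1 - z.2‖ ^ p) ∂π) + D * m).toReal :=
      ENNReal.toReal_mono hfin hkey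
    rw [ENNReal.toReal_add hπcost_ne hDmne, ENNReal.toReal_mul,
      ENNReal.toReal_ofReal (Real.rpow_nonneg diam_nonneg p)] at hmono
    have hWβ : Wpp p β γ = sInf {r | ∃ π : Measure (Euc × Euc),
        π.map Prod.fst = β ∧ π.map Prod.snd = γ ∧ r = ∫ z, ‖z.1 - z.2‖ ^ p ∂π} := rfl
    rw [← hWβ] at hrlt
    have := hWle.trans (e1 ▸ hmono)
    rw [← e2] at this
    linarith

lemma dens_meas (μ : Measure Euc) [SFinite μ] (χ : Euc → ℝ) (hχ : Continuous χ) :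
    Measurable fun z => ∫⁻ x, ENNReal.ofReal (χ (z - x)) ∂μ := by
  apply Measurable.lintegral_prod_right (f := fun z x => ENNReal.ofReal (χ (z - x)))
  exact ENNReal.measurable_ofReal.comp (hχ.measurable.comp measurable_sub)

lemma dens_le (μ : Measure Euc) [IsProbabilityMeasure μ] (χ : Euc → ℝ) (C : ℝ)
    (hC : ∀ x, χ x ≤ C) (z : Euc) :
    ∫⁻ x, ENNReal.ofReal (χ (z - x)) ∂μ ≤ ENNReal.ofReal C := by
  calc ∫⁻ x, ENNReal.ofReal (χ (z - x)) ∂μ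
      ≤ ∫⁻ _, ENNReal.ofReal C ∂μ :=
        lintegral_mono fun x => ENNReal.ofReal_le_ofReal (hC _)
    _ = ENNReal.ofReal C := by simp

lemma dens_zero (μ : Measure Euc) (𝒳 : Set Euc) (hμ : μ 𝒳ᶜ = 0) (σ : ℝ)
    (χ : Euc → ℝ) (hχsupp : Function.support χ ⊆ ball (0 : Euc) σ)
    (z : Euc) (hz : z ∉ 𝒳 + ball (0 : Euc) σ) :
    ∫⁻ x, ENNReal.ofReal (χ (z - x)) ∂μ = 0 := by
  have hae : ∀ᵐ x ∂μ, x ∈ 𝒳 := by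
    rw [ae_iff]
    exact hμ
  have hz0 : ∀ᵐ x ∂μ, ENNReal.ofReal (χ (z - x)) = 0 := by
    filter_upwards [hae] with x hx
    have hzero : χ (z - x) = 0 := by
      by_contra hne
      have hmem : z - x ∈ ball (0 : Euc) σ := hχsupp hne
      have := Set.add_mem_add hx hmem
      rw [show x + (z - x) = z by abel] at this
      exact hz this
    rw [hzero, ENNReal.ofReal_zero]
  rw [lintegral_congr_ae hz0, lintegral_zero]

lemma abs_integral_le (S : Set Euc) (hSm : MeasurableSet S) (hSfin : volume S ≠ ⊤)
    (C : ℝ) (hC : 0 ≤ C) (g : Euc → ℝ≥0∞)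
    (hgC : ∀ x, g x ≤ ENNReal.ofReal C) (hgS : ∀ x, x ∉ S → g x = 0)
    (f : Euc → ℝ) (hf : AEStronglyMeasurable f (volume.restrict S))
    (h1 : eLpNorm f 2 (volume.restrict S) ≤ 1) :
    |∫ x, f x ∂(volume.withDensity g)| ≤ C * Real.sqrt (volume S).toReal := by
  have hle : volume.withDensity g ≤ (ENNReal.ofReal C) • volume.restrict S := by
    refine Measure.le_intro fun A hA _ => ?_
    rw [withDensity_apply _ hA, Measure.smul_apply, Measure.restrict_apply hA, smul_eq_mul]
    calc ∫⁻ x in A, g x ∂volume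
        ≤ ∫⁻ x in A, S.indicator (fun _ => ENNReal.ofReal C) x ∂volume := by
          refine lintegral_mono fun x => ?_
          by_cases hx : x ∈ S
          · simp only [Set.indicator_of_mem hx]
            exact hgC x
          · simp only [Set.indicator_of_notMem hx]
            exact le_of_eq (hgS x hx)
      _ = ∫⁻ x, (A.indicator (S.indicator (fun _ => ENNReal.ofReal C))) x ∂volume := by
          rw [lintegral_indicator hA]
      _ = ∫⁻ x, ((A ∩ S).indicator (fun _ => ENNReal.ofReal C)) x ∂volume := by
          rw [Set.indicator_indicator]
      _ = ENNReal.ofReal C * volume (A ∩ S) := lintegral_indicator_const (hA.inter hSm) _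
  have hnorm : ‖∫ x, f x ∂(volume.withDensity g)‖ ≤
      (∫⁻ x, ENNReal.ofReal ‖f x‖ ∂(volume.withDensity g)).toReal :=
    norm_integral_le_lintegral_norm f
  have hchain : ∫⁻ x, ENNReal.ofReal ‖f x‖ ∂(volume.withDensity g) ≤
      ENNReal.ofReal (C * Real.sqrt (volume S).toReal) := by
    calc ∫⁻ x, ENNReal.ofReal ‖f x‖ ∂(volume.withDensity g)
        ≤ ∫⁻ x, ENNReal.ofReal ‖f x‖ ∂((ENNReal.ofReal C) • volume.restrict S) :=
          lintegral_mono' hle le_rfl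
      _ = ENNReal.ofReal C * ∫⁻ x, (‖f x‖₊ : ℝ≥0∞) ∂(volume.restrict S) := by
          rw [lintegral_smul_measure]
          congr 1
          refine lintegral_congr fun x => ofReal_norm (f x)
      _ = ENNReal.ofReal C * eLpNorm f 1 (volume.restrict S) := by
          exact congrArg (ENNReal.ofReal C * ·) (eLpNorm_one_eq_lintegral_enorm (f := f) (μ := volume.restrict S)).symm
      _ ≤ ENNReal.ofReal C * (eLpNorm f 2 (volume.restrict S) *
            (volume.restrict S Set.univ) ^ (1 / (1:ℝ≥0∞).toReal - 1 / (2:ℝ≥0∞).toReal)) := by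
          refine mul_le_mul_right (eLpNorm_le_eLpNorm_mul_rpow_measure_univ
            (by norm_num) hf) _
      _ ≤ ENNReal.ofReal C * (1 * (volume S) ^ (1/2 : ℝ)) := by
          refine mul_le_mul_right (mul_le_mul h1 ?_ zero_le zero_le_one) _
          rw [Measure.restrict_apply_univ]
          norm_num
      _ = ENNReal.ofReal C * ENNReal.ofReal (Real.sqrt (volume S).toReal) := by
          rw [one_mul, ← ENNReal.ofReal_toReal hSfin,
            ENNReal.ofReal_rpow_of_nonneg ENNReal.toReal_nonneg (by norm_num : (0:ℝ) ≤ 1/2),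
            Real.sqrt_eq_rpow, ENNReal.ofReal_toReal hSfin]
      _ = ENNReal.ofReal (C * Real.sqrt (volume S).toReal) := by
          rw [ENNReal.ofReal_mul hC]
  rw [← Real.norm_eq_abs]
  refine hnorm.trans ?_
  calc (∫⁻ x, ENNReal.ofReal ‖f x‖ ∂(volume.withDensity g)).toReal
      ≤ (ENNReal.ofReal (C * Real.sqrt (volume S).toReal)).toReal :=
        ENNReal.toReal_mono ENNReal.ofReal_ne_top hchain
    _ = C * Real.sqrt (volume S).toReal :=
        ENNReal.toReal_ofReal (mul_nonneg hC (Real.sqrt_nonneg _))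

lemma m_repr (g₁ g₀ : Euc → ℝ≥0∞) (hg₁ : Measurable g₁) (hg₀ : Measurable g₀)
    (hfin : ∫⁻ x, g₀ x ≠ ⊤) :
    ∫⁻ x, (g₁ x - g₁ x ⊓ g₀ x) =
      volume.withDensity g₁ {x | g₀ x < g₁ x} - volume.withDensity g₀ {x | g₀ x < g₁ x} := by
  set A := {x | g₀ x < g₁ x} with hAdef
  have hA : MeasurableSet A := measurableSet_lt hg₀ hg₁
  have heq : (fun x => g₁ x - g₁ x ⊓ g₀ x) = A.indicator (fun x => g₁ x - g₀ x) := by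
    funext x
    by_cases hx : x ∈ A
    · rw [Set.indicator_of_mem hx]
      congr 1
      exact inf_eq_right.mpr (le_of_lt hx)
    · rw [Set.indicator_of_notMem hx]
      have : g₁ x ≤ g₀ x := not_lt.mp hx
      rw [inf_eq_left.mpr this, tsub_self]
  rw [heq, lintegral_indicator hA, withDensity_apply _ hA, withDensity_apply _ hA,
    lintegral_sub hg₀ (ne_top_of_le_ne_top hfin (setLIntegral_le_lintegral _ _))
      (ae_restrict_of_forall_mem hA fun x hx => le_of_lt hx)]

lemma witness_bound (S : Set Euc) (hSm : MeasurableSet S) (hSfin : volume S ≠ ⊤)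
    (hSpos : 0 < volume S)
    (g₁ g₀ : Euc → ℝ≥0∞) (hg₁ : Measurable g₁) (hg₀ : Measurable g₀)
    [IsProbabilityMeasure (volume.withDensity g₁)]
    [IsProbabilityMeasure (volume.withDensity g₀)]
    (𝒮 : Set ℝ) (hbdd : BddAbove 𝒮)
    (hmem : ∀ f : Euc → ℝ, MemLp f 2 (volume.restrict S) →
      eLpNorm f 2 (volume.restrict S) ≤ 1 →
      (|(∫ x, f x ∂(volume.withDensity g₁)) - ∫ x, f x ∂(volume.withDensity g₀)| ∈ 𝒮)) :
    (∫⁻ x, (g₁ x - g₁ x ⊓ g₀ x)).toReal ≤ Real.sqrt (volume S).toReal * sSup 𝒮 := by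
  set α := volume.withDensity g₁ with hαdef
  set β := volume.withDensity g₀ with hβdef
  set A := {x | g₀ x < g₁ x} with hAdef
  have hA : MeasurableSet A := measurableSet_lt hg₀ hg₁
  have hint₀ : ∫⁻ x, g₀ x = 1 := by
    rw [← setLIntegral_univ, ← withDensity_apply _ MeasurableSet.univ]
    exact measure_univ
  have hrepr := m_repr g₁ g₀ hg₁ hg₀ (hint₀ ▸ ENNReal.one_ne_top)
  have hβα : β A ≤ α A := by
    rw [hαdef, hβdef, withDensity_apply _ hA, withDensity_apply _ hA]
    exact lintegral_mono_ae (ae_restrict_of_forall_mem hA fun x hx => le_of_lt hx)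
  have hαAfin : α A ≠ ⊤ := (lt_of_le_of_lt (measure_mono (Set.subset_univ _))
    (by rw [measure_univ]; exact ENNReal.one_lt_top)).ne
  have hmR : (∫⁻ x, (g₁ x - g₁ x ⊓ g₀ x)).toReal = (α A).toReal - (β A).toReal := by
    rw [hrepr, ENNReal.toReal_sub_of_le hβα hαAfin]
  set lamS := (volume S).toReal with hlamSdef
  have hlamSpos : 0 < lamS := ENNReal.toReal_pos hSpos.ne' hSfin
  have hsq : 0 < Real.sqrt lamS := Real.sqrt_pos.mpr hlamSpos
  set c₀ := (Real.sqrt lamS)⁻¹ with hc₀def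
  have hc₀pos : 0 < c₀ := inv_pos.mpr hsq
  set f₀ : Euc → ℝ := A.indicator fun _ => c₀ with hf₀def
  have hrA : (volume.restrict S) A ≠ ⊤ :=
    (lt_of_le_of_lt (le_trans (measure_mono (Set.subset_univ _))
      (le_of_eq (Measure.restrict_apply_univ _))) (lt_of_le_of_lt le_rfl
        (lt_of_le_of_lt le_rfl hSfin.lt_top))).ne
  have hf₀mem : MemLp f₀ 2 (volume.restrict S) :=
    memLp_indicator_const 2 hA c₀ (Or.inr hrA)
  have hf₀norm : eLpNorm f₀ 2 (volume.restrict S) ≤ 1 := by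
    rw [hf₀def, eLpNorm_indicator_const hA (by norm_num) (by norm_num)]
    have h2 : (1 / (2:ℝ≥0∞).toReal) = (1/2 : ℝ) := by norm_num
    rw [h2]
    calc (‖c₀‖₊ : ℝ≥0∞) * ((volume.restrict S) A) ^ (1/2 : ℝ)
        ≤ ENNReal.ofReal c₀ * (volume S) ^ (1/2 : ℝ) := by
          refine mul_le_mul ?_ ?_ zero_le zero_le
          · rw [← enorm_eq_nnnorm, ← ofReal_norm, Real.norm_of_nonneg hc₀pos.le]
          · refine ENNReal.rpow_le_rpow ?_ (by norm_num)
            rw [Measure.restrict_apply hA]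
            exact measure_mono Set.inter_subset_right
      _ = ENNReal.ofReal c₀ * ENNReal.ofReal (Real.sqrt lamS) := by
          rw [← ENNReal.ofReal_toReal hSfin, ENNReal.ofReal_rpow_of_nonneg
            ENNReal.toReal_nonneg (by norm_num : (0:ℝ) ≤ 1/2), Real.sqrt_eq_rpow]
      _ = ENNReal.ofReal (c₀ * Real.sqrt lamS) := by rw [ENNReal.ofReal_mul hc₀pos.le]
      _ = 1 := by
          rw [hc₀def, inv_mul_cancel₀ hsq.ne', ENNReal.ofReal_one]
  have hval : |(∫ x, f₀ x ∂α) - ∫ x, f₀ x ∂β| = ((α A).toReal - (β A).toReal) * c₀ := by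
    rw [hf₀def, integral_indicator_const c₀ hA, integral_indicator_const c₀ hA]
    rw [measureReal_def, measureReal_def, smul_eq_mul, smul_eq_mul, ← sub_mul, abs_mul, abs_of_nonneg hc₀pos.le,
      abs_of_nonneg (sub_nonneg.mpr (ENNReal.toReal_mono hαAfin hβα))]
  have hr₀mem : ((α A).toReal - (β A).toReal) * c₀ ∈ 𝒮 := hval ▸ hmem f₀ hf₀mem hf₀norm
  have hsSup : ((α A).toReal - (β A).toReal) * c₀ ≤ sSup 𝒮 := le_csSup hbdd hr₀mem
  rw [hmR]
  calc (α A).toReal - (β A).toReal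
      = Real.sqrt lamS * (((α A).toReal - (β A).toReal) * c₀) := by
        field_simp [hc₀def]
        rw [hc₀def, mul_assoc, mul_inv_cancel₀ hsq.ne', mul_one]
    _ ≤ Real.sqrt lamS * sSup 𝒮 := mul_le_mul_of_nonneg_left hsSup (Real.sqrt_nonneg _)

end Aux

/-- Lipschitz continuity of the smooth Wasserstein functional
S_p^{(σ)}(·,ν) with respect to the L²(𝒳_σ)-unit-ball sup-norm of the smoothed difference:
|S_p^{(σ)}(μ₁,ν) − S_p^{(σ)}(μ₀,ν)| ≤ √λ(𝒳_σ) · diam(𝒳_σ)^p ·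
  sup_{‖f‖_{L²(𝒳_σ)} ≤ 1} |∫ f d((μ₁−μ₀)∗η_σ)|. -/
theorem stmt13 {d : ℕ} (𝒳 : Set (EuclideanSpace ℝ (Fin d))) (h𝒳 : IsCompact 𝒳)
    (p σ : ℝ) (hp : 1 < p) (hσ : 0 < σ)
    (χσ : EuclideanSpace ℝ (Fin d) → ℝ) (hχsmooth : ContDiff ℝ (⊤ : ℕ∞) χσ)
    (hχpos : ∀ x, 0 ≤ χσ x)
    (hχsupp : Function.support χσ ⊆ ball (0 : EuclideanSpace ℝ (Fin d)) σ)
    (η : Measure (EuclideanSpace ℝ (Fin d)))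
    (hη : η = volume.withDensity (fun x => ENNReal.ofReal (χσ x)))
    [IsProbabilityMeasure η]
    (μ₀ μ₁ ν : Measure (EuclideanSpace ℝ (Fin d)))
    [IsProbabilityMeasure μ₀] [IsProbabilityMeasure μ₁] [IsProbabilityMeasure ν]
    (hμ₀ : μ₀ 𝒳ᶜ = 0) (hμ₁ : μ₁ 𝒳ᶜ = 0) (hν : ν 𝒳ᶜ = 0) :
    |Wpp p (Measure.conv μ₁ η) (Measure.conv ν η) -
        Wpp p (Measure.conv μ₀ η) (Measure.conv ν η)| ≤
      Real.sqrt (volume (𝒳 + closedBall (0 : EuclideanSpace ℝ (Fin d)) σ)).toReal *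
        (Metric.diam (𝒳 + closedBall (0 : EuclideanSpace ℝ (Fin d)) σ)) ^ p *
        sSup {r | ∃ f : EuclideanSpace ℝ (Fin d) → ℝ,
          MemLp f 2 (volume.restrict (𝒳 + closedBall (0 : EuclideanSpace ℝ (Fin d)) σ)) ∧
          eLpNorm f 2 (volume.restrict (𝒳 + closedBall (0 : EuclideanSpace ℝ (Fin d)) σ)) ≤ 1 ∧
          r = |(∫ x, f x ∂(Measure.conv μ₁ η)) - ∫ x, f x ∂(Measure.conv μ₀ η)|} := by
  have hχcont : Continuous χσ := hχsmooth.continuous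
  set S := 𝒳 + closedBall (0 : EuclideanSpace ℝ (Fin d)) σ with hSdef
  have hScomp : IsCompact S := h𝒳.add (isCompact_closedBall _ _)
  have hSm : MeasurableSet S := hScomp.isClosed.measurableSet
  have hSfin : volume S ≠ ⊤ := hScomp.measure_lt_top.ne
  have h𝒳ne : 𝒳.Nonempty := by
    rw [Set.nonempty_iff_ne_empty]
    rintro rfl
    rw [Set.compl_empty, measure_univ] at hμ₀
    exact one_ne_zero hμ₀
  have hSpos : 0 < volume S := by
    obtain ⟨x₀, hx₀⟩ := h𝒳ne
    calc (0:ℝ≥0∞) < volume (closedBall (0 : EuclideanSpace ℝ (Fin d)) σ) :=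
          measure_closedBall_pos volume _ hσ
      _ = volume (x₀ +ᵥ closedBall (0 : EuclideanSpace ℝ (Fin d)) σ) := (measure_vadd _ _ _).symm
      _ ≤ volume S := measure_mono (by
          rintro z ⟨y, hy, rfl⟩
          exact Set.add_mem_add hx₀ hy)
  have hsuppsub : tsupport χσ ⊆ closedBall (0 : EuclideanSpace ℝ (Fin d)) σ :=
    closure_minimal (hχsupp.trans ball_subset_closedBall) isClosed_closedBall
  have hsuppc : HasCompactSupport χσ :=
    IsCompact.of_isClosed_subset (isCompact_closedBall _ _) isClosed_closure hsuppsub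
  obtain ⟨xm, hxm⟩ := hχcont.exists_forall_ge_of_hasCompactSupport hsuppc
  set g₁ := fun z => ∫⁻ x, ENNReal.ofReal (χσ (z - x)) ∂μ₁ with hg₁def
  set g₀ := fun z => ∫⁻ x, ENNReal.ofReal (χσ (z - x)) ∂μ₀ with hg₀def
  set gν := fun z => ∫⁻ x, ENNReal.ofReal (χσ (z - x)) ∂ν with hgνdef
  have hg₁m : Measurable g₁ := dens_meas μ₁ χσ hχcont
  have hg₀m : Measurable g₀ := dens_meas μ₀ χσ hχcont
  have hgνm : Measurable gν := dens_meas ν χσ hχcont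
  have hconv₁ : Measure.conv μ₁ η = volume.withDensity g₁ := by
    rw [hη]; exact conv_density μ₁ χσ hχcont
  have hconv₀ : Measure.conv μ₀ η = volume.withDensity g₀ := by
    rw [hη]; exact conv_density μ₀ χσ hχcont
  have hconvν : Measure.conv ν η = volume.withDensity gν := by
    rw [hη]; exact conv_density ν χσ hχcont
  haveI hα : IsProbabilityMeasure (volume.withDensity g₁) :=
    hconv₁ ▸ (inferInstance : IsProbabilityMeasure (Measure.conv μ₁ η))
  haveI hβ : IsProbabilityMeasure (volume.withDensity g₀) :=
    hconv₀ ▸ (inferInstance : IsProbabilityMeasure (Measure.conv μ₀ η))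
  haveI hγ : IsProbabilityMeasure (volume.withDensity gν) :=
    hconvν ▸ (inferInstance : IsProbabilityMeasure (Measure.conv ν η))
  have hball : 𝒳 + ball (0 : EuclideanSpace ℝ (Fin d)) σ ⊆ S :=
    Set.add_subset_add_left ball_subset_closedBall
  have hg₁S : ∀ z, z ∉ S → g₁ z = 0 := fun z hz =>
    dens_zero μ₁ 𝒳 hμ₁ σ χσ hχsupp z fun hmem => hz (hball hmem)
  have hg₀S : ∀ z, z ∉ S → g₀ z = 0 := fun z hz =>
    dens_zero μ₀ 𝒳 hμ₀ σ χσ hχsupp z fun hmem => hz (hball hmem)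
  have hgνS : ∀ z, z ∉ S → gν z = 0 := fun z hz =>
    dens_zero ν 𝒳 hν σ χσ hχsupp z fun hmem => hz (hball hmem)
  have hg₁C : ∀ z, g₁ z ≤ ENNReal.ofReal (χσ xm) := fun z => dens_le μ₁ χσ _ hxm z
  have hg₀C : ∀ z, g₀ z ≤ ENNReal.ofReal (χσ xm) := fun z => dens_le μ₀ χσ _ hxm z
  have hconc : ∀ g : EuclideanSpace ℝ (Fin d) → ℝ≥0∞, (∀ z, z ∉ S → g z = 0) →
      volume.withDensity g Sᶜ = 0 := by
    intro g hgS
    rw [withDensity_apply _ hSm.compl]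
    rw [setLIntegral_congr_fun hSm.compl
      (fun z hz => hgS z hz)]
    simp
  have hαS : volume.withDensity g₁ Sᶜ = 0 := hconc g₁ hg₁S
  have hβS : volume.withDensity g₀ Sᶜ = 0 := hconc g₀ hg₀S
  have hγS : volume.withDensity gν Sᶜ = 0 := hconc gν hgνS
  have hp0 : (0:ℝ) < p := lt_trans one_pos hp
  have hmain₁ := transport_bound S hScomp hSm p hp0 g₁ g₀ hg₁m hg₀m
    (volume.withDensity gν) hαS hβS hγS
  have hmain₀ := transport_bound S hScomp hSm p hp0 g₀ g₁ hg₀m hg₁m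
    (volume.withDensity gν) hβS hαS hγS
  rw [hconv₁, hconv₀, hconvν]
  set 𝒮 := {r | ∃ f : EuclideanSpace ℝ (Fin d) → ℝ,
      MemLp f 2 (volume.restrict S) ∧ eLpNorm f 2 (volume.restrict S) ≤ 1 ∧
      r = |(∫ x, f x ∂(volume.withDensity g₁)) - ∫ x, f x ∂(volume.withDensity g₀)|}
    with h𝒮def
  have hbdd : BddAbove 𝒮 := by
    refine ⟨2 * (χσ xm * Real.sqrt (volume S).toReal), fun r hr => ?_⟩
    obtain ⟨f, hfm, hfn, rfl⟩ := hr
    have b₁ := abs_integral_le S hSm hSfin (χσ xm) (hχpos xm) g₁ hg₁C hg₁S f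
      hfm.aestronglyMeasurable hfn
    have b₀ := abs_integral_le S hSm hSfin (χσ xm) (hχpos xm) g₀ hg₀C hg₀S f
      hfm.aestronglyMeasurable hfn
    calc |(∫ x, f x ∂(volume.withDensity g₁)) - ∫ x, f x ∂(volume.withDensity g₀)|
        ≤ |∫ x, f x ∂(volume.withDensity g₁)| + |∫ x, f x ∂(volume.withDensity g₀)| :=
          abs_sub _ _
      _ ≤ 2 * (χσ xm * Real.sqrt (volume S).toReal) := by linarith
  have hmemS : ∀ f : EuclideanSpace ℝ (Fin d) → ℝ, MemLp f 2 (volume.restrict S) →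
      eLpNorm f 2 (volume.restrict S) ≤ 1 →
      |(∫ x, f x ∂(volume.withDensity g₁)) - ∫ x, f x ∂(volume.withDensity g₀)| ∈ 𝒮 :=
    fun f hf h1 => ⟨f, hf, h1, rfl⟩
  have hmemS' : ∀ f : EuclideanSpace ℝ (Fin d) → ℝ, MemLp f 2 (volume.restrict S) →
      eLpNorm f 2 (volume.restrict S) ≤ 1 →
      |(∫ x, f x ∂(volume.withDensity g₀)) - ∫ x, f x ∂(volume.withDensity g₁)| ∈ 𝒮 :=
    fun f hf h1 => ⟨f, hf, h1, (abs_sub_comm _ _)⟩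
  have hw₁ := witness_bound S hSm hSfin hSpos g₁ g₀ hg₁m hg₀m 𝒮 hbdd hmemS
  have hw₀ := witness_bound S hSm hSfin hSpos g₀ g₁ hg₀m hg₁m 𝒮 hbdd hmemS'
  have hdiamp : (0:ℝ) ≤ diam S ^ p := Real.rpow_nonneg diam_nonneg p
  rw [abs_sub_le_iff]
  constructor
  · calc Wpp p (volume.withDensity g₁) (volume.withDensity gν) -
          Wpp p (volume.withDensity g₀) (volume.withDensity gν)
        ≤ diam S ^ p * (∫⁻ x, (g₁ x - g₁ x ⊓ g₀ x)).toReal := by linarith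
      _ ≤ diam S ^ p * (Real.sqrt (volume S).toReal * sSup 𝒮) :=
          mul_le_mul_of_nonneg_left hw₁ hdiamp
      _ = Real.sqrt (volume S).toReal * diam S ^ p * sSup 𝒮 := by ring
  · calc Wpp p (volume.withDensity g₀) (volume.withDensity gν) -
          Wpp p (volume.withDensity g₁) (volume.withDensity gν)
        ≤ diam S ^ p * (∫⁻ x, (g₀ x - g₀ x ⊓ g₁ x)).toReal := by linarith
      _ ≤ diam S ^ p * (Real.sqrt (volume S).toReal * sSup 𝒮) :=
          mul_le_mul_of_nonneg_left hw₀ hdiamp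
      _ = Real.sqrt (volume S).toReal * diam S ^ p * sSup 𝒮 := by ring
end
end
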